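/- Let n ≥ 4 and let t = diag(t₁, …, tₙ) be an invertible diagonal n×n complex matrix with t₂ = t₁⁻¹ and t₄ = t₃⁻¹ (so that the diagonal block diag(t₁, t₂, t₃, t₄) lies in the maximal torus of Sp(4, ℂ)). Then conjugation Ad(t): X ↦ t·X·t⁻¹ maps the subspace 𝔥 into itself, and the induced linear automorphism of the quotient vector space 𝔤𝔩(n, ℂ)/𝔥 has determinant (t₅·t₆···tₙ)⁴. In particular this determinant equals the fourth power of the determinant of the lower-right (n−4)×(n−4) block of t, verifying the determinant condition of the main theorem for the cone over the second secant variety of the Grassmannian Gr(2, n). -/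

import Mathlib

open Matrix

/-- The standard `4×4` skew form `J₄`. -/
noncomputable def J4 : Matrix (Fin 4) (Fin 4) ℂ :=
  !![0, 1, 0, 0; -1, 0, 0, 0; 0, 0, 0, 1; 0, 0, -1, 0]

/-- The Lie algebra `𝔥 ⊂ 𝔤𝔩(n, ℂ)` of the stabiliser of `e₁∧f₁ + e₂∧f₂`:
matrices with vanishing lower-left `(n−4)×4` block whose upper-left `4×4`
block lies in `𝔰𝔭(4, ℂ)`. -/
noncomputable def hLie (n : ℕ) (hn : 4 ≤ n) : Submodule ℂ (Matrix (Fin n) (Fin n) ℂ) where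
  carrier := {X | (∀ i j : Fin n, 4 ≤ i.val → j.val < 4 → X i j = 0) ∧
    X.submatrix (Fin.castLE hn) (Fin.castLE hn) * J4 +
      J4 * (X.submatrix (Fin.castLE hn) (Fin.castLE hn))ᵀ = 0}
  zero_mem' := by
    refine ⟨fun i j _ _ => rfl, ?_⟩
    simp
  add_mem' := by
    rintro a b ⟨ha1, ha2⟩ ⟨hb1, hb2⟩
    refine ⟨fun i j hi hj => ?_, ?_⟩
    · simp [Matrix.add_apply, ha1 i j hi hj, hb1 i j hi hj]
    · have key : (a + b).submatrix (Fin.castLE hn) (Fin.castLE hn) =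
          a.submatrix (Fin.castLE hn) (Fin.castLE hn) +
            b.submatrix (Fin.castLE hn) (Fin.castLE hn) := rfl
      rw [key, Matrix.transpose_add, add_mul, mul_add]
      calc a.submatrix (Fin.castLE hn) (Fin.castLE hn) * J4 +
            b.submatrix (Fin.castLE hn) (Fin.castLE hn) * J4 +
            (J4 * (a.submatrix (Fin.castLE hn) (Fin.castLE hn))ᵀ +
              J4 * (b.submatrix (Fin.castLE hn) (Fin.castLE hn))ᵀ)
          = (a.submatrix (Fin.castLE hn) (Fin.castLE hn) * J4 +
              J4 * (a.submatrix (Fin.castLE hn) (Fin.castLE hn))ᵀ) +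
            (b.submatrix (Fin.castLE hn) (Fin.castLE hn) * J4 +
              J4 * (b.submatrix (Fin.castLE hn) (Fin.castLE hn))ᵀ) := by abel
        _ = 0 := by rw [ha2, hb2, add_zero]
  smul_mem' := by
    rintro c a ⟨ha1, ha2⟩
    refine ⟨fun i j hi hj => by simp [Matrix.smul_apply, ha1 i j hi hj], ?_⟩
    have key : (c • a).submatrix (Fin.castLE hn) (Fin.castLE hn) =
        c • a.submatrix (Fin.castLE hn) (Fin.castLE hn) := rfl
    rw [key, Matrix.transpose_smul, Matrix.smul_mul, Matrix.mul_smul,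
      ← smul_add, ha2, smul_zero]

/-!
Put `Y := X₁₁` and `spDefect Y := Y J₄ + J₄ Yᵀ`, a skew matrix. A matrix lies in `𝔥` iff its
lower-left block and the entries of `spDefect Y` above the diagonal vanish, and these
`4(n−4) + 6` entries can be prescribed freely, so they are coordinates on `𝔤𝔩(n, ℂ)/𝔥`.
In them `Ad(t)` acts diagonally: the entry `(i, j)` of the lower-left block has weight `tᵢ/tⱼ`,
and since `diag(s)⁻¹ J₄ = J₄ diag(s)` for `s = (t₁, …, t₄)`, the entry `(a, b)` of `spDefect Y`
has weight `sₐ s_b`. With `s₁s₂s₃s₄ = 1` the product of all weights is `(t₅ ⋯ tₙ)⁴`.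
-/

namespace LinearMap

variable {R M N : Type*} [CommRing R] [AddCommGroup M] [Module R M] [AddCommGroup N] [Module R N]
  {π : M →ₗ[R] N} {p : Submodule R M} {f : M →ₗ[R] M} {g : N →ₗ[R] N}

theorem le_comap_of_comp_eq (hp : ker π = p) (hfg : π ∘ₗ f = g ∘ₗ π) : p ≤ p.comap f := by
  subst hp
  intro x hx
  rw [Submodule.mem_comap, mem_ker, ← comp_apply, hfg, comp_apply, mem_ker.mp hx, map_zero]

theorem det_mapQ_eq_of_comp_eq (hπ : Function.Surjective π) (hp : ker π = p)
    (hfg : π ∘ₗ f = g ∘ₗ π) (h : p ≤ p.comap f) :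
    LinearMap.det (p.mapQ p f h) = LinearMap.det g := by
  subst hp
  let e := π.quotKerEquivOfSurjective hπ
  have hconj : (e : _ →ₗ[R] N) ∘ₗ (ker π).mapQ (ker π) f h ∘ₗ (e.symm : N →ₗ[R] _) = g := by
    ext y
    obtain ⟨x, rfl⟩ := hπ y
    have hx : e.symm (π x) = Submodule.Quotient.mk x := by
      rw [LinearEquiv.symm_apply_eq]; rfl
    simp only [comp_apply, LinearEquiv.coe_coe, hx, Submodule.mapQ_apply]
    exact congrFun (congrArg DFunLike.coe hfg) x
  rw [← det_conj _ e, hconj]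

end LinearMap

theorem Matrix.eq_zero_of_transpose_eq_neg {ι R : Type*} [LinearOrder ι] [AddGroup R]
    [IsAddTorsionFree R] {Z : Matrix ι ι R} (hZ : Zᵀ = -Z) (h : ∀ a b, a < b → Z a b = 0) :
    Z = 0 := by
  have hswap : ∀ a b, Z b a = -Z a b := fun a b => congrFun (congrFun hZ a) b
  ext a b
  rcases lt_trichotomy a b with hab | rfl | hab
  · exact h a b hab
  · exact self_eq_neg.mp (hswap a a)
  · rw [hswap, h b a hab, neg_zero]; rfl

theorem J4_transpose : J4ᵀ = -J4 := by
  ext i j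
  fin_cases i <;> fin_cases j <;> simp [J4]

theorem J4_mul_J4 : J4 * J4 = -1 := by
  ext i j
  fin_cases i <;> fin_cases j <;> simp [J4, Matrix.mul_apply, Fin.sum_univ_four]

theorem diagonal_inv_mul_J4 {s : Fin 4 → ℂ} (h1 : s 1 = (s 0)⁻¹) (h3 : s 3 = (s 2)⁻¹) :
    diagonal (fun a => (s a)⁻¹) * J4 = J4 * diagonal s := by
  ext i j
  rw [diagonal_mul, mul_diagonal]
  fin_cases i <;> fin_cases j <;> simp [J4, h1, h3]

noncomputable def spDefect (Y : Matrix (Fin 4) (Fin 4) ℂ) : Matrix (Fin 4) (Fin 4) ℂ :=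
  Y * J4 + J4 * Yᵀ

theorem spDefect_add (Y Z : Matrix (Fin 4) (Fin 4) ℂ) :
    spDefect (Y + Z) = spDefect Y + spDefect Z := by
  simp only [spDefect, transpose_add, Matrix.add_mul, Matrix.mul_add]
  abel

theorem spDefect_smul (c : ℂ) (Y : Matrix (Fin 4) (Fin 4) ℂ) :
    spDefect (c • Y) = c • spDefect Y := by
  simp only [spDefect, transpose_smul, Matrix.smul_mul, Matrix.mul_smul, smul_add]

theorem spDefect_transpose (Y : Matrix (Fin 4) (Fin 4) ℂ) : (spDefect Y)ᵀ = -spDefect Y := by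
  simp only [spDefect, transpose_add, transpose_mul, transpose_transpose, J4_transpose,
    mul_neg, neg_mul, neg_add_rev, add_comm]

theorem spDefect_diagonal_conj {s : Fin 4 → ℂ} (h1 : s 1 = (s 0)⁻¹) (h3 : s 3 = (s 2)⁻¹)
    (Y : Matrix (Fin 4) (Fin 4) ℂ) :
    spDefect (diagonal s * Y * diagonal (fun a => (s a)⁻¹)) =
      diagonal s * spDefect Y * diagonal s := by
  have hJ := diagonal_inv_mul_J4 h1 h3
  have hJ' : J4 * diagonal (fun a => (s a)⁻¹) = diagonal s * J4 := by
    simpa [J4_transpose] using congrArg transpose hJ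
  simp only [spDefect, transpose_mul, diagonal_transpose, Matrix.mul_add, Matrix.add_mul,
    Matrix.mul_assoc, hJ]
  rw [← Matrix.mul_assoc J4, hJ']
  simp only [Matrix.mul_assoc]

theorem spDefect_neg_mul_J4 (A : Matrix (Fin 4) (Fin 4) ℂ) : spDefect (-(A * J4)) = A - Aᵀ := by
  simp only [spDefect, transpose_neg, transpose_mul, J4_transpose, Matrix.neg_mul,
    Matrix.mul_neg, Matrix.mul_assoc, J4_mul_J4, ← Matrix.mul_assoc J4, neg_neg, Matrix.mul_one,
    Matrix.one_mul, sub_eq_add_neg]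

abbrev topLeft {n : ℕ} (hn : 4 ≤ n) (X : Matrix (Fin n) (Fin n) ℂ) : Matrix (Fin 4) (Fin 4) ℂ :=
  X.submatrix (Fin.castLE hn) (Fin.castLE hn)

abbrev QuotIdx (n : ℕ) : Type :=
  ({i : Fin n // 4 ≤ i.val} × Fin 4) ⊕ {p : Fin 4 × Fin 4 // p.1 < p.2}

noncomputable def quotCoord {n : ℕ} (hn : 4 ≤ n) :
    Matrix (Fin n) (Fin n) ℂ →ₗ[ℂ] (QuotIdx n → ℂ) where
  toFun X := Sum.elim (fun p => X p.1 (Fin.castLE hn p.2))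
    (fun q => spDefect (topLeft hn X) q.1.1 q.1.2)
  map_add' X Y := by
    funext s
    cases s <;> simp [topLeft, submatrix_add, spDefect_add]
  map_smul' c X := by
    funext s
    cases s <;> simp [topLeft, submatrix_smul, spDefect_smul]

@[simp]
theorem quotCoord_inl {n : ℕ} (hn : 4 ≤ n) (X : Matrix (Fin n) (Fin n) ℂ)
    (p : {i : Fin n // 4 ≤ i.val} × Fin 4) :
    quotCoord hn X (Sum.inl p) = X p.1 (Fin.castLE hn p.2) := rfl

@[simp]
theorem quotCoord_inr {n : ℕ} (hn : 4 ≤ n) (X : Matrix (Fin n) (Fin n) ℂ)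
    (q : {p : Fin 4 × Fin 4 // p.1 < p.2}) :
    quotCoord hn X (Sum.inr q) = spDefect (topLeft hn X) q.1.1 q.1.2 := rfl

theorem ker_quotCoord {n : ℕ} (hn : 4 ≤ n) : LinearMap.ker (quotCoord hn) = hLie n hn := by
  ext X
  have hlow : (∀ p : {i : Fin n // 4 ≤ i.val} × Fin 4, X p.1 (Fin.castLE hn p.2) = 0) ↔
      ∀ i j : Fin n, 4 ≤ i.val → j.val < 4 → X i j = 0 :=
    ⟨fun h i j hi hj => h (⟨i, hi⟩, ⟨j, hj⟩), fun h p => h _ _ p.1.2 p.2.2⟩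
  have hskew :
      (∀ q : {p : Fin 4 × Fin 4 // p.1 < p.2}, spDefect (topLeft hn X) q.1.1 q.1.2 = 0) ↔
        spDefect (topLeft hn X) = 0 :=
    ⟨fun h => Matrix.eq_zero_of_transpose_eq_neg (spDefect_transpose _) fun a b hab =>
      h ⟨(a, b), hab⟩, fun h q => by rw [h]; rfl⟩
  rw [LinearMap.mem_ker, funext_iff, Sum.forall]
  simp only [quotCoord_inl, quotCoord_inr, Pi.zero_apply]
  exact and_congr hlow hskew

theorem quotCoord_surjective {n : ℕ} (hn : 4 ≤ n) : Function.Surjective (quotCoord hn) := by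
  intro y
  let A : Matrix (Fin 4) (Fin 4) ℂ :=
    of fun a b => if h : a < b then y (Sum.inr ⟨(a, b), h⟩) else 0
  let X : Matrix (Fin n) (Fin n) ℂ := of fun i j =>
    if hj : j.val < 4 then
      if hi : i.val < 4 then (-(A * J4)) ⟨i, hi⟩ ⟨j, hj⟩
      else y (Sum.inl (⟨i, by omega⟩, ⟨j, hj⟩))
    else 0
  have hX : topLeft hn X = -(A * J4) := by
    ext a b
    simp [X, a.isLt, b.isLt]
  refine ⟨X, funext fun s => ?_⟩
  rcases s with ⟨i, j⟩ | ⟨⟨a, b⟩, hab⟩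
  · simp [X, j.isLt, i.2.not_gt]
  · simp [hX, spDefect_neg_mul_J4, A, hab, hab.not_gt]

theorem topLeft_diagonal_conj {n : ℕ} (hn : 4 ≤ n) (t : Fin n → ℂ)
    (X : Matrix (Fin n) (Fin n) ℂ) :
    topLeft hn (diagonal t * X * diagonal fun i => (t i)⁻¹) =
      diagonal (fun a => t (Fin.castLE hn a)) * topLeft hn X *
        diagonal fun a => (t (Fin.castLE hn a))⁻¹ := by
  ext a b
  simp [diagonal_mul, mul_diagonal]

noncomputable def quotWeight {n : ℕ} (hn : 4 ≤ n) (t : Fin n → ℂ) : QuotIdx n → ℂ :=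
  Sum.elim (fun p => t p.1 * (t (Fin.castLE hn p.2))⁻¹)
    (fun q => t (Fin.castLE hn q.1.1) * t (Fin.castLE hn q.1.2))

theorem quotCoord_comp_conj {n : ℕ} (hn : 4 ≤ n) {t : Fin n → ℂ}
    (h1 : t (Fin.castLE hn 1) = (t (Fin.castLE hn 0))⁻¹)
    (h3 : t (Fin.castLE hn 3) = (t (Fin.castLE hn 2))⁻¹) :
    quotCoord hn ∘ₗ ((LinearMap.mulLeft ℂ (diagonal t)).comp
        (LinearMap.mulRight ℂ (diagonal fun i => (t i)⁻¹))) =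
      toLin' (diagonal (quotWeight hn t)) ∘ₗ quotCoord hn := by
  ext X : 1
  funext s
  rcases s with ⟨i, j⟩ | ⟨⟨a, b⟩, hab⟩
  · simp only [LinearMap.coe_comp, Function.comp_apply, LinearMap.mulRight_apply,
      LinearMap.mulLeft_apply, quotCoord_inl, diagonal_mul, mul_diagonal, quotWeight, toLin'_apply,
      mulVec_diagonal, Sum.elim_inl]
    ring
  · simp only [LinearMap.coe_comp, Function.comp_apply, LinearMap.mulRight_apply,
      LinearMap.mulLeft_apply, ← Matrix.mul_assoc, quotCoord_inr, topLeft_diagonal_conj,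
      spDefect_diagonal_conj (s := fun a => t (Fin.castLE hn a)) h1 h3,
      mul_diagonal, diagonal_mul, quotWeight, toLin'_apply,
      mulVec_diagonal, Sum.elim_inr]
    ring

theorem prod_pairs_lt_fin_four {M : Type*} [CommMonoid M] (s : Fin 4 → M) :
    ∏ q : {p : Fin 4 × Fin 4 // p.1 < p.2}, s q.1.1 * s q.1.2 = (∏ a, s a) ^ 3 := by
  rw [← Finset.prod_subtype (Finset.univ.filter fun p : Fin 4 × Fin 4 => p.1 < p.2) (by simp)
    fun p => s p.1 * s p.2, Finset.prod_filter, Fintype.prod_prod_type]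
  simp [Fin.prod_univ_four, pow_three, mul_comm, mul_assoc, mul_left_comm]

theorem prod_quotWeight {n : ℕ} (hn : 4 ≤ n) {t : Fin n → ℂ} (ht : ∀ i, t i ≠ 0)
    (h1 : t (Fin.castLE hn 1) = (t (Fin.castLE hn 0))⁻¹)
    (h3 : t (Fin.castLE hn 3) = (t (Fin.castLE hn 2))⁻¹) :
    ∏ s, quotWeight hn t s = (∏ i ∈ Finset.univ.filter fun i : Fin n => 4 ≤ i.val, t i) ^ 4 := by
  have hsp : ∏ a : Fin 4, t (Fin.castLE hn a) = 1 := by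
    rw [Fin.prod_univ_four, h1, h3, mul_inv_cancel₀ (ht _), one_mul, mul_inv_cancel₀ (ht _)]
  have hlow : ∏ p : {i : Fin n // 4 ≤ i.val} × Fin 4, t p.1 * (t (Fin.castLE hn p.2))⁻¹ =
      ∏ i : {i : Fin n // 4 ≤ i.val}, t i ^ 4 := by
    rw [Fintype.prod_prod_type]
    refine Finset.prod_congr rfl fun i _ => ?_
    dsimp only
    rw [Finset.prod_mul_distrib, Finset.prod_const, Finset.prod_inv_distrib, hsp, inv_one,
      mul_one, Finset.card_univ, Fintype.card_fin]
  rw [Fintype.prod_sum_type]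
  simp only [quotWeight, Sum.elim_inl, Sum.elim_inr]
  rw [hlow, prod_pairs_lt_fin_four fun a => t (Fin.castLE hn a), hsp, one_pow, mul_one,
    Finset.prod_pow, Finset.prod_subtype _ (fun i => Finset.mem_filter_univ i) t]

/-- For `t = diag(t₁, …, tₙ)` in the restricted torus (so `t₂ = t₁⁻¹`, `t₄ = t₃⁻¹`),
conjugation `Ad(t) : X ↦ t·X·t⁻¹` maps `𝔥` into itself and the induced linear
automorphism of `𝔤𝔩(n, ℂ)/𝔥` has determinant `(t₅·t₆···tₙ)⁴`. -/
theorem det_restricted_torus_on_tangent_space_of_secant_variety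
    {n : ℕ} (hn : 4 ≤ n) (t : Fin n → ℂ) (ht : ∀ i, t i ≠ 0)
    (h1 : t ⟨1, by omega⟩ = (t ⟨0, by omega⟩)⁻¹)
    (h3 : t ⟨3, by omega⟩ = (t ⟨2, by omega⟩)⁻¹) :
    ∃ h : hLie n hn ≤ (hLie n hn).comap
        ((LinearMap.mulLeft ℂ (Matrix.diagonal t)).comp
          (LinearMap.mulRight ℂ (Matrix.diagonal fun i => (t i)⁻¹))),
      LinearMap.det ((hLie n hn).mapQ (hLie n hn)
          ((LinearMap.mulLeft ℂ (Matrix.diagonal t)).comp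
            (LinearMap.mulRight ℂ (Matrix.diagonal fun i => (t i)⁻¹))) h) =
        (∏ i ∈ Finset.univ.filter fun i : Fin n => 4 ≤ i.val, t i) ^ 4 := by
  have hconj := quotCoord_comp_conj hn h1 h3
  refine ⟨LinearMap.le_comap_of_comp_eq (ker_quotCoord hn) hconj, ?_⟩
  rw [LinearMap.det_mapQ_eq_of_comp_eq (quotCoord_surjective hn) (ker_quotCoord hn) hconj,
    LinearMap.det_toLin', det_diagonal, prod_quotWeight hn ht h1 h3]
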